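/- arXiv:2308.12614 — 2 statements merged into one kernel-verified Lean document; each statement's English description precedes it below -/
import Mathlib

section
/- A bipartite graph B has Ferrers dimension at most 2 if and only if the rows and columns of its biadjacency matrix can be permuted independently so that no 0 entry has a 1 both below it (in the same column) and to its right (in the same row). -/
/-!
Rows of a Ferrers relation have nested neighbourhoods, so listing the rows of `F₁` and the
columns of `F₂` by decreasing degree makes both relations "staircases"; a 0 of `F₁ ∩ F₂` is a
0 of `F₁`, which kills everything below it, or a 0 of `F₂`, which kills everything to its right.
Conversely, given a stair-free ordering, let `F₁ x y` say that row `x` has a 1 weakly right of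
column `y` and `F₂ x y` that column `y` has a 1 weakly below row `x`. Both are Ferrers, and a
0 of `E` lying in both would have a 1 to its right and a 1 below it.
-/

/-- A Ferrers bigraph: its biadjacency matrix contains no 2×2 permutation submatrix. -/
def IsFerrers {n m : ℕ} (F : Fin n → Fin m → Prop) : Prop :=
  ∀ x₁ x₂ : Fin n, ∀ y₁ y₂ : Fin m, F x₁ y₁ → F x₂ y₂ → F x₁ y₂ ∨ F x₂ y₁

/-- `B` has Ferrers dimension at most 2: it is the intersection of two Ferrers bigraphs. -/
def FerrersDimAtMostTwo {n m : ℕ} (E : Fin n → Fin m → Prop) : Prop :=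
  ∃ F₁ F₂ : Fin n → Fin m → Prop, IsFerrers F₁ ∧ IsFerrers F₂ ∧
    ∀ x y, E x y ↔ F₁ x y ∧ F₂ x y

/-- Rows and columns can be permuted independently so that no 0 entry has a 1 both
below it (same column) and to its right (same row). -/
def StairFreeOrdering {n m : ℕ} (E : Fin n → Fin m → Prop) : Prop :=
  ∃ σ : Equiv.Perm (Fin n), ∃ τ : Equiv.Perm (Fin m),
    ∀ i j, ¬ E (σ i) (τ j) →
      (∀ j', j < j' → ¬ E (σ i) (τ j')) ∨ (∀ i', i < i' → ¬ E (σ i') (τ j))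

namespace IsFerrers

variable {n m : ℕ} {F : Fin n → Fin m → Prop}

theorem flip (hF : IsFerrers F) : IsFerrers (_root_.flip F) :=
  fun y₁ y₂ x₁ x₂ h₁ h₂ => (hF x₁ x₂ y₁ y₂ h₁ h₂).symm

theorem row_subset_or_superset (hF : IsFerrers F) (x₁ x₂ : Fin n) :
    {y | F x₁ y} ⊆ {y | F x₂ y} ∨ {y | F x₂ y} ⊆ {y | F x₁ y} := by
  by_contra! h
  obtain ⟨⟨y₁, hy₁, hy₁'⟩, ⟨y₂, hy₂, hy₂'⟩⟩ := Set.not_subset.1 h.1, Set.not_subset.1 h.2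
  exact (hF x₁ x₂ y₁ y₂ hy₁ hy₂).elim hy₂' hy₁'

theorem exists_perm_antitone_rows (hF : IsFerrers F) :
    ∃ σ : Equiv.Perm (Fin n), Antitone fun i => {y | F (σ i) y} := by
  let degree : Fin n → ℕᵒᵈ := fun x => OrderDual.toDual {y | F x y}.ncard
  refine ⟨Tuple.sort degree, fun i i' hii' => ?_⟩
  have hcard := Tuple.monotone_sort degree hii'
  rcases hF.row_subset_or_superset (Tuple.sort degree i) (Tuple.sort degree i') with h | h
  · exact (Set.eq_of_subset_of_ncard_le h hcard).ge
  · exact h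

end IsFerrers

theorem isFerrers_exists_le {n m : ℕ} {ι : Type*} [LinearOrder ι] (a : Fin m → ι)
    (P : Fin n → ι → Prop) : IsFerrers fun x y => ∃ k, a y ≤ k ∧ P x k := by
  rintro x₁ x₂ y₁ y₂ ⟨k₁, hk₁, h₁⟩ ⟨k₂, hk₂, h₂⟩
  rcases le_total (a y₂) (a y₁) with hle | hle
  · exact Or.inl ⟨k₁, hle.trans hk₁, h₁⟩
  · exact Or.inr ⟨k₂, hle.trans hk₂, h₂⟩

theorem FerrersDimAtMostTwo.stairFreeOrdering {n m : ℕ} {E : Fin n → Fin m → Prop}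
    (hE : FerrersDimAtMostTwo E) : StairFreeOrdering E := by
  obtain ⟨F₁, F₂, hF₁, hF₂, hE⟩ := hE
  obtain ⟨σ, hσ⟩ := hF₁.exists_perm_antitone_rows
  obtain ⟨τ, hτ⟩ := hF₂.flip.exists_perm_antitone_rows
  refine ⟨σ, τ, fun i j h0 => ?_⟩
  by_cases h₁ : F₁ (σ i) (τ j)
  · exact Or.inl fun j' hj' hE' => h0 ((hE _ _).2 ⟨h₁, hτ hj'.le ((hE _ _).1 hE').2⟩)
  · exact Or.inr fun i' hi' hE' => h₁ (hσ hi'.le ((hE _ _).1 hE').1)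

theorem StairFreeOrdering.ferrersDimAtMostTwo {n m : ℕ} {E : Fin n → Fin m → Prop}
    (hE : StairFreeOrdering E) : FerrersDimAtMostTwo E := by
  obtain ⟨σ, τ, hstair⟩ := hE
  refine ⟨fun x y => ∃ j, τ.symm y ≤ j ∧ E x (τ j), fun x y => ∃ i, σ.symm x ≤ i ∧ E (σ i) y,
    isFerrers_exists_le _ _, (isFerrers_exists_le σ.symm fun y i => E (σ i) y).flip,
    fun x y => ?_⟩
  obtain ⟨i, rfl⟩ := σ.surjective x
  obtain ⟨j, rfl⟩ := τ.surjective y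
  simp only [Equiv.symm_apply_apply]
  refine ⟨fun h => ⟨⟨j, le_rfl, h⟩, ⟨i, le_rfl, h⟩⟩, ?_⟩
  rintro ⟨⟨j', hj, hright⟩, ⟨i', hi, hbelow⟩⟩
  by_contra h0
  rcases hstair i j h0 with hrow | hcol
  · exact hrow j' (hj.lt_of_ne (by rintro rfl; exact h0 hright)) hright
  · exact hcol i' (hi.lt_of_ne (by rintro rfl; exact h0 hbelow)) hbelow

theorem ferrers_dim_le_two_iff_stair_free {n m : ℕ} (E : Fin n → Fin m → Prop) :
    FerrersDimAtMostTwo E ↔ StairFreeOrdering E :=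
  ⟨FerrersDimAtMostTwo.stairFreeOrdering, StairFreeOrdering.ferrersDimAtMostTwo⟩
end

section
/- A bipartite graph B is a signed-interval bigraph if and only if B has Ferrers dimension at most 2. -/
/-- `B` is a signed-interval bigraph: each vertex `v` gets a pair `(l v, r v)`
(positive interval if `l v ≤ r v`, negative if `l v > r v`), and `x y` is an edge
iff both intervals are positive and intersect, or the (reversed) negative interval
of one is contained in the positive interval of the other. -/
def IsSignedIntervalBigraph {n m : ℕ} (E : Fin n → Fin m → Prop) : Prop :=
  ∃ lx rx : Fin n → ℝ, ∃ ly ry : Fin m → ℝ,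
    ∀ x y, E x y ↔
      ((lx x ≤ rx x ∧ ly y ≤ ry y ∧ lx x ≤ ry y ∧ ly y ≤ rx x) ∨
       (rx x < lx x ∧ ly y ≤ ry y ∧ ly y ≤ rx x ∧ lx x ≤ ry y) ∨
       (ry y < ly y ∧ lx x ≤ rx x ∧ lx x ≤ ry y ∧ ly y ≤ rx x))

theorem signedInterval_adj_iff {α : Type*} [LinearOrder α] (lx rx ly ry : α) :
    ((lx ≤ rx ∧ ly ≤ ry ∧ lx ≤ ry ∧ ly ≤ rx) ∨
     (rx < lx ∧ ly ≤ ry ∧ ly ≤ rx ∧ lx ≤ ry) ∨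
     (ry < ly ∧ lx ≤ rx ∧ lx ≤ ry ∧ ly ≤ rx)) ↔ lx ≤ ry ∧ ly ≤ rx := by
  constructor
  · rintro (⟨-, -, hxy, hyx⟩ | ⟨-, -, hyx, hxy⟩ | ⟨-, -, hxy, hyx⟩) <;> exact ⟨hxy, hyx⟩
  · rintro ⟨hxy, hyx⟩
    rcases le_or_gt lx rx with hx | hx <;> rcases le_or_gt ly ry with hy | hy
    · exact Or.inl ⟨hx, hy, hxy, hyx⟩
    · exact Or.inr (Or.inr ⟨hy, hx, hxy, hyx⟩)
    · exact Or.inr (Or.inl ⟨hx, hy, hyx, hxy⟩)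
    · exact (lt_irrefl lx (((hxy.trans_lt hy).trans_le hyx).trans hx)).elim

theorem isFerrers_threshold {α : Type*} [LinearOrder α] {n m : ℕ}
    (a : Fin n → α) (b : Fin m → α) : IsFerrers fun x y => b y ≤ a x := by
  intro x₁ x₂ y₁ y₂ h₁ h₂
  rcases le_total (a x₁) (a x₂) with h | h
  · exact Or.inr (h₁.trans h)
  · exact Or.inl (h₂.trans h)

namespace IsFerrers

variable {n m : ℕ} {F : Fin n → Fin m → Prop}

theorem neighbourhood_subset (hF : IsFerrers F) {x : Fin n} {y y' : Fin m}
    (hy : ¬F x y) (hy' : F x y') : {x' | F x' y} ⊆ {x' | F x' y'} :=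
  fun _ hx' => (hF _ x y y' hx' hy').resolve_right hy

theorem exists_threshold (hF : IsFerrers F) :
    ∃ a : Fin n → ℕ, ∃ b : Fin m → ℕ, ∀ x y, F x y ↔ b y ≤ a x := by
  let above (y : Fin m) : Set (Fin m) := {y' | ∀ x, F x y → F x y'}
  refine ⟨fun x => {y | F x y}.ncard, fun y => (above y).ncard, fun x y => ⟨fun hxy => ?_, ?_⟩⟩
  · exact Set.ncard_le_ncard fun y' hy' => hy' x hxy
  · contrapose!
    intro hxy
    refine Set.ncard_lt_ncard ⟨fun y' hy' => hF.neighbourhood_subset hxy hy', fun h => ?_⟩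
    exact hxy (h fun _ => id)

end IsFerrers

theorem signed_interval_bigraph_iff_ferrers_dim_le_two {n m : ℕ}
    (E : Fin n → Fin m → Prop) :
    IsSignedIntervalBigraph E ↔ FerrersDimAtMostTwo E := by
  constructor
  · rintro ⟨lx, rx, ly, ry, hE⟩
    refine ⟨fun x y => lx x ≤ ry y, fun x y => ly y ≤ rx x,
      isFerrers_threshold (α := ℝᵒᵈ) (fun x => OrderDual.toDual (lx x))
        (fun y => OrderDual.toDual (ry y)),
      isFerrers_threshold rx ly, fun x y => ?_⟩
    rw [hE, signedInterval_adj_iff]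
  · rintro ⟨F₁, F₂, hF₁, hF₂, hE⟩
    obtain ⟨a₁, b₁, hF₁⟩ := hF₁.exists_threshold
    obtain ⟨a₂, b₂, hF₂⟩ := hF₂.exists_threshold
    refine ⟨fun x => -(a₂ x : ℝ), fun x => a₁ x, fun y => b₁ y, fun y => -(b₂ y : ℝ),
      fun x y => ?_⟩
    rw [signedInterval_adj_iff, hE, hF₁, hF₂, neg_le_neg_iff, Nat.cast_le, Nat.cast_le, and_comm]
end
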